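/- Let n ≥ 2 and let B be a convex body in Minkowski space E^{n+1}_1. Let N and R be the normal cone (with respect to the Minkowski form) and the recession cone of B. Assume that every element of N is spacelike, and that N has nonempty interior in ℝ^{n+1}. Then there exists a nonzero vector v₀ ∈ (int N) ∩ R. -/

import Mathlib

open Set

/-- The Minkowski bilinear form on `ℝ^(n+1)`:
`⟪x,y⟫ = x₁y₁ + ⋯ + xₙyₙ − x_{n+1}y_{n+1}`. -/
def mink {n : ℕ} (x y : EuclideanSpace ℝ (Fin (n + 1))) : ℝ :=
  (∑ i : Fin n, x i.castSucc * y i.castSucc) - x (Fin.last n) * y (Fin.last n)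

/-- The normal cone of a convex body `B` with respect to the Minkowski form. -/
def minkNormalCone {n : ℕ} (B : Set (EuclideanSpace ℝ (Fin (n + 1)))) :
    Set (EuclideanSpace ℝ (Fin (n + 1))) :=
  {w | w ≠ 0 ∧ ∃ p ∈ frontier B, ∀ x ∈ B, 0 ≤ mink (x - p) w}

/-- The recession cone of a convex body `B`. -/
def recessionCone {n : ℕ} (B : Set (EuclideanSpace ℝ (Fin n))) :
    Set (EuclideanSpace ℝ (Fin n)) :=
  {v | ∀ x ∈ B, ∀ t : ℝ, 0 ≤ t → x + t • v ∈ B}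


/-! Write `mink x y = ⟪x, J y⟫` with `J` the time reflection. Then the Minkowski normal cone is
`J⁻¹' S` for the Euclidean inward normal cone `S`, which lies in the barrier cone `K` of `B` (the
vectors `u` with `⟪·, u⟫` bounded below on `B`). Linear functionals from `interior K` are coercive
on `B`, hence attain their minimum at a boundary point, so `interior K \ {0} ⊆ S`. The hypothesis
on `N` therefore makes the form `u ↦ ⟪u, J u⟫` nonnegative on `interior K`. A separation argument
then gives `u₀ ∈ interior K` with `J u₀` in the dual cone of `K`, which is contained in the
recession cone. Finally `u₀ ≠ 0` because the form is negative on the time axis, and `v₀ = J u₀`. -/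

open scoped RealInnerProductSpace Topology

section ConvexGeometry

variable {E : Type*} [NormedAddCommGroup E] [InnerProductSpace ℝ E]

def barrierCone (B : Set E) : PointedCone ℝ E where
  carrier := {u | ∃ c, ∀ x ∈ B, c ≤ ⟪x, u⟫}
  zero_mem' := ⟨0, fun x _ => by simp⟩
  add_mem' := by
    rintro u v ⟨c, hc⟩ ⟨d, hd⟩
    exact ⟨c + d, fun x hx => by rw [inner_add_right]; exact add_le_add (hc x hx) (hd x hx)⟩
  smul_mem' := by
    rintro t u ⟨c, hc⟩
    refine ⟨t * c, fun x hx => ?_⟩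
    change (t : ℝ) * c ≤ ⟪x, (t : ℝ) • u⟫
    rw [real_inner_smul_right]
    exact mul_le_mul_of_nonneg_left (hc x hx) t.2

def inwardNormalCone (B : Set E) : Set E :=
  {u | u ≠ 0 ∧ ∃ p ∈ frontier B, ∀ x ∈ B, 0 ≤ ⟪x - p, u⟫}

lemma inwardNormalCone_subset_barrierCone (B : Set E) :
    inwardNormalCone B ⊆ barrierCone B := by
  rintro u ⟨-, p, -, hp⟩
  exact ⟨⟪p, u⟫, fun x hx => by simpa [inner_sub_left] using hp x hx⟩

lemma mem_frontier_of_isMinOn_inner {B : Set E} {u p : E} (hu : u ≠ 0) (hp : p ∈ B)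
    (hmin : IsMinOn (⟪·, u⟫) B p) : p ∈ frontier B := by
  refine ⟨subset_closure hp, fun hint => ?_⟩
  have hlim : Filter.Tendsto (fun t : ℝ => p - t • u) (𝓝[>] 0) (𝓝 p) := by
    refine (Continuous.tendsto' ?_ 0 p (by simp)).mono_left nhdsWithin_le_nhds
    fun_prop
  obtain ⟨t, htB, ht⟩ :=
    ((hlim.eventually (isOpen_interior.mem_nhds hint)).and self_mem_nhdsWithin).exists
  have hle : ⟪p, u⟫ ≤ ⟪p - t • u, u⟫ := hmin (interior_subset htB)
  rw [inner_sub_left, real_inner_smul_left, real_inner_self_eq_norm_sq] at hle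
  have : 0 < t * ‖u‖ ^ 2 := mul_pos ht (by positivity)
  linarith

lemma OrthonormalBasis.isBounded_of_abs_inner_le {ι : Type*} [Fintype ι]
    (b : OrthonormalBasis ι ℝ E) {s : Set E} (C : ι → ℝ)
    (hs : ∀ x ∈ s, ∀ i, |⟪b i, x⟫| ≤ C i) : Bornology.IsBounded s := by
  refine isBounded_iff_forall_norm_le.2 ⟨∑ i, C i, fun x hx => ?_⟩
  calc ‖x‖ = ‖∑ i, ⟪b i, x⟫ • b i‖ := by rw [b.sum_repr']
    _ ≤ ∑ i, ‖⟪b i, x⟫ • b i‖ := norm_sum_le _ _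
    _ = ∑ i, |⟪b i, x⟫| := by simp [norm_smul, b.orthonormal.1]
    _ ≤ ∑ i, C i := Finset.sum_le_sum fun i _ => hs x hx i

/-- Small tilts `u ± δ • b i` stay in the barrier cone, and each of them bounds the `i`-th
coordinate on the sublevel set from one side. -/
lemma isBounded_sublevel_inner_of_mem_interior_barrierCone [FiniteDimensional ℝ E] {B : Set E}
    {u : E} (hu : u ∈ interior (barrierCone B : Set E)) (r : ℝ) :
    Bornology.IsBounded {x ∈ B | ⟪x, u⟫ ≤ r} := by
  obtain ⟨ε, hε, hball⟩ := Metric.isOpen_iff.mp isOpen_interior u hu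
  set b := stdOrthonormalBasis ℝ E
  have htilt : ∀ i (s : ℝ), |s| < ε → ∃ c, ∀ x ∈ B, c ≤ ⟪x, u⟫ + s * ⟪b i, x⟫ := by
    intro i s hs
    have hmem : u + s • b i ∈ barrierCone B := interior_subset <| hball <| by
      simpa [norm_smul, b.orthonormal.1 i] using hs
    obtain ⟨c, hc⟩ := hmem
    exact ⟨c, fun x hx => by
      simpa [inner_add_right, real_inner_smul_right, real_inner_comm x] using hc x hx⟩
  have hδ : |ε / 2| < ε := by rw [abs_of_pos (by positivity)]; linarith
  choose c₁ hc₁ using fun i => htilt i (ε / 2) hδ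
  choose c₂ hc₂ using fun i => htilt i (-(ε / 2)) (by rwa [abs_neg])
  refine b.isBounded_of_abs_inner_le (fun i => (r - min (c₁ i) (c₂ i)) / (ε / 2))
    fun x ⟨hxB, hxr⟩ i => ?_
  have h₁ := hc₁ i x hxB
  have h₂ := hc₂ i x hxB
  have := min_le_left (c₁ i) (c₂ i)
  have := min_le_right (c₁ i) (c₂ i)
  rw [le_div_iff₀ (by positivity), ← abs_of_pos (half_pos hε), ← abs_mul, abs_le]
  constructor <;> linarith

lemma exists_isMinOn_inner_of_mem_interior_barrierCone [FiniteDimensional ℝ E] {B : Set E}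
    (hB : IsClosed B) (hne : B.Nonempty) {u : E} (hu : u ∈ interior (barrierCone B : Set E)) :
    ∃ p ∈ B, IsMinOn (⟪·, u⟫) B p := by
  obtain ⟨x₀, hx₀⟩ := hne
  have hcont : Continuous (⟪·, u⟫) := by fun_prop
  have hT : IsCompact {x ∈ B | ⟪x, u⟫ ≤ ⟪x₀, u⟫} :=
    Metric.isCompact_of_isClosed_isBounded (hB.inter (isClosed_le hcont continuous_const))
      (isBounded_sublevel_inner_of_mem_interior_barrierCone hu _)
  obtain ⟨p, ⟨hpB, hpx₀⟩, hpmin⟩ := hT.exists_isMinOn ⟨x₀, hx₀, le_rfl⟩ hcont.continuousOn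
  refine ⟨p, hpB, fun x hx => ?_⟩
  by_cases hx₀x : ⟪x, u⟫ ≤ ⟪x₀, u⟫
  · exact hpmin ⟨hx, hx₀x⟩
  · show ⟪p, u⟫ ≤ ⟪x, u⟫
    linarith

lemma interior_barrierCone_diff_zero_subset [FiniteDimensional ℝ E] {B : Set E}
    (hB : IsClosed B) (hne : B.Nonempty) :
    interior (barrierCone B : Set E) \ {0} ⊆ inwardNormalCone B := by
  rintro u ⟨hu, hu0⟩
  obtain ⟨p, hp, hmin⟩ := exists_isMinOn_inner_of_mem_interior_barrierCone hB hne hu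
  refine ⟨hu0, p, mem_frontier_of_isMinOn_inner hu0 hp hmin, fun x hx => ?_⟩
  rw [inner_sub_left, sub_nonneg]
  exact hmin hx

lemma innerDual_barrierCone_subset_recessionCone {m : ℕ} {B : Set (EuclideanSpace ℝ (Fin m))}
    (hconv : Convex ℝ B) (hclosed : IsClosed B) :
    (ProperCone.innerDual (barrierCone B : Set (EuclideanSpace ℝ (Fin m))) : Set _) ⊆
      recessionCone B := by
  intro a ha x hx t ht
  by_contra hy
  obtain ⟨f, r, hfB, hfy⟩ := geometric_hahn_banach_closed_point hconv hclosed hy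
  set u := (InnerProductSpace.toDual ℝ _).symm (-f)
  have hu : ∀ z, ⟪u, z⟫ = -f z := fun z => InnerProductSpace.toDual_symm_apply
  have huK : u ∈ barrierCone B :=
    ⟨-r, fun z hz => by rw [real_inner_comm, hu]; linarith [hfB z hz]⟩
  have hua : 0 ≤ ⟪u, a⟫ := ha huK
  have hfa : f a ≤ 0 := by linarith [hu a]
  rw [map_add, map_smul, smul_eq_mul] at hfy
  linarith [hfB x hx, mul_nonpos_of_nonneg_of_nonpos ht hfa]

lemma exists_inner_neg_of_disjoint_pointedCone [CompleteSpace E] {U : Set E} (hUo : IsOpen U)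
    (hUc : Convex ℝ U) (D : PointedCone ℝ E) (hdisj : Disjoint U D) :
    ∃ a, (∀ u ∈ U, ⟪a, u⟫ < 0) ∧ ∀ d ∈ D, 0 ≤ ⟪a, d⟫ := by
  obtain ⟨f, r, hfU, hfD⟩ := geometric_hahn_banach_open hUc hUo D.convex hdisj
  have hr : r ≤ 0 := by simpa using hfD 0 D.zero_mem
  have hfD₀ : ∀ d ∈ D, 0 ≤ f d := by
    intro d hd
    by_contra! hneg
    have hscaled :=
      hfD _ (D.smul_mem (div_nonneg_of_nonpos (by linarith : r - 1 ≤ 0) hneg.le) hd)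
    rw [map_smul, smul_eq_mul, div_mul_cancel₀ _ hneg.ne] at hscaled
    linarith
  refine ⟨(InnerProductSpace.toDual ℝ E).symm f, fun u hu => ?_, fun d hd => ?_⟩ <;>
    rw [InnerProductSpace.toDual_symm_apply]
  · exact (hfU u hu).trans_le hr
  · exact hfD₀ d hd

lemma PointedCone.innerDual_innerDual_subset_closure [CompleteSpace E] (C : PointedCone ℝ E) :
    (ProperCone.innerDual (ProperCone.innerDual (C : Set E) : Set E) : Set E) ⊆
      closure (C : Set E) := by
  intro b hb
  by_contra hbC
  obtain ⟨y, hy, hby⟩ := ProperCone.hyperplane_separation' (Submodule.closure C) hbC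
  have hyC : y ∈ ProperCone.innerDual (C : Set E) := fun x hx => hy x (subset_closure hx)
  exact (hby.trans_le (real_inner_comm b y ▸ hb hyC)).false

/-- At `t • b + u ∈ D` the form equals `t² ⟪b, J b⟫ + 2t ⟪b, J u⟫ + ⟪u, J u⟫`, which would be
negative for large `t`. -/
lemma PointedCone.inner_apply_nonneg_of_inner_apply_self_nonpos (D : PointedCone ℝ E)
    {J : E →ₗ[ℝ] E} (hJ : J.IsSymmetric) (hq : ∀ u ∈ D, 0 ≤ ⟪u, J u⟫) {b u : E} (hb : b ∈ D)
    (hu : u ∈ D) (hbb : ⟪b, J b⟫ ≤ 0) : 0 ≤ ⟪b, J u⟫ := by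
  by_contra! hX
  set t := (⟪u, J u⟫ + 1) / (-2 * ⟪b, J u⟫)
  have ht : 0 ≤ t := div_nonneg (by linarith [hq u hu]) (by linarith)
  have hexpand : ⟪t • b + u, J (t • b + u)⟫ =
      t ^ 2 * ⟪b, J b⟫ + 2 * t * ⟪b, J u⟫ + ⟪u, J u⟫ := by
    simp only [map_add, map_smul, inner_add_left, inner_add_right, real_inner_smul_left,
      real_inner_smul_right]
    rw [← hJ u b, real_inner_comm b (J u)]
    ring
  have h2t : 2 * t * ⟪b, J u⟫ = -(⟪u, J u⟫ + 1) := by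
    have := hX.ne
    simp only [t]
    field_simp
  have := hq _ (D.add_mem (D.smul_mem ht hb) hu)
  nlinarith [mul_nonpos_of_nonneg_of_nonpos (sq_nonneg t) hbb]

/-- If not, a hyperplane separates `interior C` from `J⁻¹' C*`. Its normal is `J b` with
`b ∈ closure C` by duality, and `⟪b, J u⟫ < 0` on `interior C`, so `⟪b, J b⟫ ≤ 0`, which the
previous lemma rules out. -/
theorem PointedCone.exists_mem_interior_apply_mem_innerDual [CompleteSpace E]
    (C : PointedCone ℝ E) (J : E ≃L[ℝ] E) (hJ : IsSelfAdjoint (J : E →L[ℝ] E))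
    (hC : (interior (C : Set E)).Nonempty)
    (hq : ∀ u ∈ interior (C : Set E), 0 ≤ ⟪u, J u⟫) :
    ∃ u ∈ interior (C : Set E), J u ∈ ProperCone.innerDual (C : Set E) := by
  by_contra! hdisj
  have hsymm : ∀ x y, ⟪J x, y⟫ = ⟪x, J y⟫ := hJ.isSymmetric
  obtain ⟨a, ha_int, ha_dual⟩ := exists_inner_neg_of_disjoint_pointedCone isOpen_interior
    C.convex.interior ((ProperCone.innerDual (C : Set E)).comap (J : E →L[ℝ] E))
    (Set.disjoint_left.2 hdisj)
  obtain ⟨b, rfl⟩ := J.surjective a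
  have hb : b ∈ closure (C : Set E) := C.innerDual_innerDual_subset_closure fun y hy => by
    obtain ⟨d, rfl⟩ := J.surjective y
    show 0 ≤ ⟪J d, b⟫
    rw [real_inner_comm, ← hsymm]
    exact ha_dual d hy
  have hcl : closure (interior (C : Set E)) = closure C :=
    C.convex.closure_interior_eq_closure_of_nonempty_interior hC
  have hq_cl : ∀ u ∈ closure (C : Set E), 0 ≤ ⟪u, J u⟫ := by
    rw [← hcl]
    exact closure_minimal (t := {u | 0 ≤ ⟪u, J u⟫}) hq
      (isClosed_le continuous_const (continuous_id.inner J.continuous))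
  have hbb : ⟪b, J b⟫ ≤ 0 := by
    rw [← hcl] at hb
    refine closure_minimal (t := {u | ⟪b, J u⟫ ≤ 0}) (fun u hu => ?_)
      (isClosed_le (continuous_const.inner J.continuous) continuous_const) hb
    show ⟪b, J u⟫ ≤ 0
    rw [← hsymm]
    exact (ha_int u hu).le
  obtain ⟨u₁, hu₁⟩ := hC
  have := (PointedCone.closure C).inner_apply_nonneg_of_inner_apply_self_nonpos hJ.isSymmetric
    hq_cl hb (subset_closure (interior_subset hu₁)) hbb
  exact (ha_int u₁ hu₁).not_ge (hsymm b u₁ ▸ this)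

lemma zero_notMem_interior_of_inner_apply_self_neg {C : Set E} (J : E →L[ℝ] E) {e : E}
    (he : ⟪e, J e⟫ < 0) (hq : ∀ u ∈ interior C, 0 ≤ ⟪u, J u⟫) : (0 : E) ∉ interior C := by
  intro h0
  have hopen : IsOpen ((fun t : ℝ => t • e) ⁻¹' interior C) :=
    isOpen_interior.preimage (by fun_prop)
  obtain ⟨δ, hδ, hball⟩ := Metric.isOpen_iff.mp hopen 0 (by simpa using h0)
  have hmem : δ / 2 ∈ Metric.ball (0 : ℝ) δ := by
    rw [Metric.mem_ball, dist_zero_right, Real.norm_eq_abs, abs_of_pos (by positivity)]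
    linarith
  have := hq _ (hball hmem)
  rw [map_smul, real_inner_smul_left, real_inner_smul_right, ← mul_assoc] at this
  nlinarith [mul_pos (half_pos hδ) (half_pos hδ)]

end ConvexGeometry

section Minkowski

variable {n : ℕ}

noncomputable def timeReflection (n : ℕ) :
    EuclideanSpace ℝ (Fin (n + 1)) ≃ₗᵢ[ℝ] EuclideanSpace ℝ (Fin (n + 1)) :=
  LinearIsometryEquiv.piLpCongrRight 2 fun i =>
    if i = Fin.last n then LinearIsometryEquiv.neg ℝ else LinearIsometryEquiv.refl ℝ ℝ

lemma timeReflection_apply (x : EuclideanSpace ℝ (Fin (n + 1))) (i : Fin (n + 1)) :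
    timeReflection n x i = if i = Fin.last n then -x i else x i := by
  rw [timeReflection, LinearIsometryEquiv.piLpCongrRight_apply]
  split_ifs with h <;> simp [h]

lemma timeReflection_timeReflection (x : EuclideanSpace ℝ (Fin (n + 1))) :
    timeReflection n (timeReflection n x) = x := by
  ext i
  simp only [timeReflection_apply]
  split_ifs <;> simp

lemma mink_eq_inner (x y : EuclideanSpace ℝ (Fin (n + 1))) :
    mink x y = ⟪x, timeReflection n y⟫ := by
  simp [mink, PiLp.inner_apply, Fin.sum_univ_castSucc, timeReflection_apply,
    (Fin.castSucc_lt_last _).ne, mul_comm]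
  ring

lemma mink_comm (x y : EuclideanSpace ℝ (Fin (n + 1))) : mink x y = mink y x := by
  simp only [mink, mul_comm]

lemma isSelfAdjoint_timeReflection (n : ℕ) :
    IsSelfAdjoint (timeReflection n :
      EuclideanSpace ℝ (Fin (n + 1)) →L[ℝ] EuclideanSpace ℝ (Fin (n + 1))) := by
  rw [ContinuousLinearMap.isSelfAdjoint_iff_isSymmetric]
  intro x y
  change ⟪timeReflection n x, y⟫ = ⟪x, timeReflection n y⟫
  rw [real_inner_comm, ← mink_eq_inner, ← mink_eq_inner, mink_comm]

lemma mink_single_last_self :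
    mink (EuclideanSpace.single (Fin.last n) 1) (EuclideanSpace.single (Fin.last n) 1) = -1 := by
  simp [mink, (Fin.castSucc_lt_last _).ne]

lemma minkNormalCone_eq_preimage (B : Set (EuclideanSpace ℝ (Fin (n + 1)))) :
    minkNormalCone B = timeReflection n ⁻¹' inwardNormalCone B := by
  ext w
  simp [minkNormalCone, inwardNormalCone, mink_eq_inner]

lemma interior_minkNormalCone (B : Set (EuclideanSpace ℝ (Fin (n + 1)))) :
    interior (minkNormalCone B) = timeReflection n ⁻¹' interior (inwardNormalCone B) := by
  rw [minkNormalCone_eq_preimage]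
  exact ((timeReflection n).toHomeomorph.preimage_interior _).symm

lemma inner_timeReflection_self_nonneg_of_mem_interior_barrierCone
    {B : Set (EuclideanSpace ℝ (Fin (n + 1)))} (hclosed : IsClosed B) (hne : B.Nonempty)
    (hspace : ∀ w ∈ minkNormalCone B, 0 < mink w w) {u : EuclideanSpace ℝ (Fin (n + 1))}
    (hu : u ∈ interior (barrierCone B : Set (EuclideanSpace ℝ (Fin (n + 1))))) :
    0 ≤ ⟪u, timeReflection n u⟫ := by
  rcases eq_or_ne u 0 with rfl | hu0
  · simp
  have hJu : timeReflection n u ∈ minkNormalCone B := by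
    rw [minkNormalCone_eq_preimage, Set.mem_preimage, timeReflection_timeReflection]
    exact interior_barrierCone_diff_zero_subset hclosed hne ⟨hu, hu0⟩
  simpa [mink_eq_inner, timeReflection_timeReflection, real_inner_comm] using (hspace _ hJu).le

end Minkowski

theorem stmt_11 (n : ℕ)
    (B : Set (EuclideanSpace ℝ (Fin (n + 1))))
    (hconv : Convex ℝ B) (hclosed : IsClosed B)
    (hspace : ∀ w ∈ minkNormalCone B, 0 < mink w w)
    (hNint : (interior (minkNormalCone B)).Nonempty) :
    ∃ v₀ : EuclideanSpace ℝ (Fin (n + 1)),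
      v₀ ≠ 0 ∧ v₀ ∈ interior (minkNormalCone B) ∩ recessionCone B := by
  set J := timeReflection n
  set K := barrierCone B
  obtain ⟨w, hw⟩ := hNint
  have hB : B.Nonempty := by
    obtain ⟨-, p, hp, -⟩ := interior_subset hw
    exact ⟨p, hclosed.frontier_subset hp⟩
  have hq : ∀ u ∈ interior (K : Set _), 0 ≤ ⟪u, J u⟫ := fun u hu =>
    inner_timeReflection_self_nonneg_of_mem_interior_barrierCone hclosed hB hspace hu
  rw [interior_minkNormalCone] at hw ⊢
  obtain ⟨u₀, hu₀, hdual⟩ := K.exists_mem_interior_apply_mem_innerDual J.toContinuousLinearEquiv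
    (isSelfAdjoint_timeReflection n)
    ⟨_, interior_mono (inwardNormalCone_subset_barrierCone B) hw⟩ hq
  have hu₀0 : u₀ ≠ 0 := by
    rintro rfl
    refine zero_notMem_interior_of_inner_apply_self_neg (J : _ →L[ℝ] _)
      (e := EuclideanSpace.single (Fin.last n) 1) ?_ hq hu₀
    change ⟪_, timeReflection n _⟫ < 0
    rw [← mink_eq_inner, mink_single_last_self]
    norm_num
  refine ⟨J u₀, by simpa using hu₀0, ?_,
    innerDual_barrierCone_subset_recessionCone hconv hclosed hdual⟩
  rw [Set.mem_preimage, timeReflection_timeReflection]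
  exact interior_maximal (interior_barrierCone_diff_zero_subset hclosed hB)
    (isOpen_interior.sdiff isClosed_singleton) ⟨hu₀, hu₀0⟩
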